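/- There is a polynomial p such that every purely implicational formula ρ valid in minimal logic has a quasi-polynomial tree-like proof in NM→, i.e. a tree-like NM→ proof ∂ of ρ with h(∂) + φ(∂) ≤ p(|ρ|). -/

import Mathlib

/-- Purely implicational formulas: built from propositional variables by `→`. -/
inductive Fml : Type
  | var : ℕ → Fml
  | imp : Fml → Fml → Fml
deriving DecidableEq

namespace Fml

/-- The weight of a formula: its total number of symbols. -/
def weight : Fml → ℕ
  | var _ => 1
  | imp a b => weight a + weight b + 1

/-- The (reflexive) subformula relation. -/
inductive Sub : Fml → Fml → Prop
  | refl (φ : Fml) : Sub φ φ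
  | impL {φ a b : Fml} : Sub φ a → Sub φ (imp a b)
  | impR {φ a b : Fml} : Sub φ b → Sub φ (imp a b)

/-- The antecedent of an implication (junk value on variables). -/
def antecedent : Fml → Fml
  | var n => var n
  | imp a _ => a

end Fml

/-- Tree-like natural deductions (with possible repetition nodes, i.e. NM→⁺-trees). -/
inductive DT : Type
  | leaf (φ : Fml)
  | impI (α β : Fml) (t : DT)
  | impE (α β : Fml) (t₁ t₂ : DT)
  | rep (φ : Fml) (ts : List DT)

namespace DT

/-- The formula labelling the root of a deduction tree. -/
def label : DT → Fml
  | leaf φ => φ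
  | impI α β _ => .imp α β
  | impE _ β _ _ => β
  | rep φ _ => φ

/-- Local correctness of a deduction tree w.r.t. the rules (→I), (→E), (R)ₙ (n ≥ 1). -/
inductive Correct : DT → Prop
  | leaf (φ : Fml) : Correct (leaf φ)
  | impI {α β : Fml} {t : DT} : t.label = β → Correct t → Correct (impI α β t)
  | impE {α β : Fml} {t₁ t₂ : DT} : t₁.label = α → t₂.label = .imp α β →
      Correct t₁ → Correct t₂ → Correct (impE α β t₁ t₂)
  | rep {φ : Fml} {ts : List DT} : ts ≠ [] → (∀ t ∈ ts, label t = φ) →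
      (∀ t ∈ ts, Correct t) → Correct (rep φ ts)

/-- A deduction lies in NM→ iff it uses no repetition rule. -/
inductive RepFree : DT → Prop
  | leaf (φ : Fml) : RepFree (leaf φ)
  | impI {α β : Fml} {t : DT} : RepFree t → RepFree (impI α β t)
  | impE {α β : Fml} {t₁ t₂ : DT} : RepFree t₁ → RepFree t₂ → RepFree (impE α β t₁ t₂)

/-- `ClosedUnder D t` : every deductive path of `t` from a leaf labelled `α` to the
root of `t` either contains the conclusion of an (→I)-inference discharging `α`, or
`α ∈ D` (the formulas discharged strictly below `t`).  With `D = ∅` this says that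
every deductive path of `t` is closed. -/
inductive ClosedUnder : Set Fml → DT → Prop
  | leaf {D : Set Fml} {φ : Fml} : φ ∈ D → ClosedUnder D (leaf φ)
  | impI {D : Set Fml} {α β : Fml} {t : DT} :
      ClosedUnder (insert α D) t → ClosedUnder D (impI α β t)
  | impE {D : Set Fml} {α β : Fml} {t₁ t₂ : DT} :
      ClosedUnder D t₁ → ClosedUnder D t₂ → ClosedUnder D (impE α β t₁ t₂)
  | rep {D : Set Fml} {φ : Fml} {ts : List DT} :
      (∀ t ∈ ts, ClosedUnder D t) → ClosedUnder D (rep φ ts)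

/-- The height of a deduction tree. -/
def height : DT → ℕ
  | leaf _ => 0
  | impI _ _ t => height t + 1
  | impE _ _ t₁ t₂ => max (height t₁) (height t₂) + 1
  | rep _ ts => (ts.attach.map fun t => height t.1).foldr max 0 + 1
decreasing_by
  all_goals simp_wf
  all_goals try have := List.sizeOf_lt_of_mem t.2
  all_goals omega

/-- The set of distinct formulas occurring in a deduction tree. -/
def formulas : DT → Finset Fml
  | leaf φ => {φ}
  | impI α β t => insert (.imp α β) (formulas t)
  | impE _ β t₁ t₂ => insert β (formulas t₁ ∪ formulas t₂)
  | rep φ ts => insert φ ((ts.attach.map fun t => formulas t.1).foldr (· ∪ ·) ∅)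
decreasing_by
  all_goals simp_wf
  all_goals try have := List.sizeOf_lt_of_mem t.2
  all_goals omega

/-- `φ(∂)`: the total weight of the set of distinct formulas occurring in `∂`. -/
def phi (t : DT) : ℕ := (t.formulas).sum Fml.weight

/-- The depths (= heights in the tree) of the leaves of a deduction tree. -/
def leafDepths : DT → List ℕ
  | leaf _ => [0]
  | impI _ _ t => (leafDepths t).map (· + 1)
  | impE _ _ t₁ t₂ => (leafDepths t₁ ++ leafDepths t₂).map (· + 1)
  | rep _ ts => ((ts.attach.map fun t => leafDepths t.1).flatten).map (· + 1)
decreasing_by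
  all_goals simp_wf
  all_goals try have := List.sizeOf_lt_of_mem t.2
  all_goals omega

/-- All leaves (top nodes) of the deduction have the same height. -/
def UniformLeaves (t : DT) : Prop := ∀ d ∈ t.leafDepths, d = t.height

/-- `t` is a tree-like NM→ proof of `ρ` : a locally correct, repetition-free tree
with conclusion `ρ`, all of whose deductive paths are closed. -/
def IsProofNM (t : DT) (ρ : Fml) : Prop :=
  t.RepFree ∧ t.Correct ∧ t.ClosedUnder ∅ ∧ t.label = ρ

/-- `t` is a tree-like NM→⁺ proof of `ρ`. -/
def IsProofNMPlus (t : DT) (ρ : Fml) : Prop :=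
  t.Correct ∧ t.ClosedUnder ∅ ∧ t.label = ρ

end DT

/-- `ρ` is valid in minimal logic iff it has a tree-like NM→ proof. -/
def MinValid (ρ : Fml) : Prop := ∃ t : DT, t.IsProofNM ρ

/-!
Let `S` be the subformulas of `ρ`. Soundness for the canonical Kripke model whose worlds
are finite contexts turns any proof of `ρ` into a derivation of `ρ` in which every
implication introduced or eliminated lies in `S`. Such a derivation is then compressed by
induction on the number `k` of members of `S` missing from the context `Γ`: either the goal `σ`
is already in `Γ`, or the first step of the derivation producing some new `τ ∈ S` is an
(→E) between assumptions or an (→I) whose premise needs one more assumption (so the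
induction hypothesis applies), giving `τ` with height `≤ 2k + 1`; the goal then follows
from `Γ, τ` by induction and is joined to `τ` through `τ → σ`. Each new assumption costs
height two, and all formulas used lie in `S ∪ {a → b | a, b ∈ S}`, whence
`h + φ ≤ 2|ρ| + (|ρ| + |ρ|²)(2|ρ| + 1)`.
-/

namespace Fml

def subformulas : Fml → Finset Fml
  | var n => {var n}
  | imp a b => insert (imp a b) (subformulas a ∪ subformulas b)

theorem mem_subformulas_self (φ : Fml) : φ ∈ φ.subformulas := by
  cases φ <;> simp [subformulas]

theorem weight_le_of_mem_subformulas {σ ρ : Fml} (h : σ ∈ ρ.subformulas) :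
    σ.weight ≤ ρ.weight := by
  induction ρ with
  | var n =>
    rw [subformulas, Finset.mem_singleton] at h
    rw [h]
  | imp a b iha ihb =>
    simp only [subformulas, Finset.mem_insert, Finset.mem_union] at h
    rcases h with rfl | h | h
    · rfl
    · exact (iha h).trans (by simp only [weight]; omega)
    · exact (ihb h).trans (by simp only [weight]; omega)

theorem card_subformulas_le_weight (ρ : Fml) : ρ.subformulas.card ≤ ρ.weight := by
  induction ρ with
  | var n => simp [subformulas, weight]
  | imp a b iha ihb =>
    calc (imp a b).subformulas.card
        ≤ (a.subformulas ∪ b.subformulas).card + 1 := Finset.card_insert_le _ _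
      _ ≤ a.subformulas.card + b.subformulas.card + 1 := by
        gcongr; exact Finset.card_union_le _ _
      _ ≤ (imp a b).weight := by simp only [weight]; omega

def ImpClosed (S : Finset Fml) : Prop := ∀ ⦃a b : Fml⦄, imp a b ∈ S → a ∈ S ∧ b ∈ S

theorem impClosed_subformulas (ρ : Fml) : ImpClosed ρ.subformulas := by
  intro a b h
  induction ρ with
  | var n => simp [subformulas] at h
  | imp x y ihx ihy =>
    simp only [subformulas, Finset.mem_insert, Finset.mem_union] at h ⊢
    rcases h with h | h | h
    · obtain ⟨rfl, rfl⟩ := imp.inj h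
      exact ⟨.inr (.inl (mem_subformulas_self a)), .inr (.inr (mem_subformulas_self b))⟩
    · exact ⟨.inr (.inl (ihx h).1), .inr (.inl (ihx h).2)⟩
    · exact ⟨.inr (.inr (ihy h).1), .inr (.inr (ihy h).2)⟩

def impHull (S : Finset Fml) : Finset Fml :=
  S ∪ (S ×ˢ S).image fun p => imp p.1 p.2

theorem subset_impHull (S : Finset Fml) : S ⊆ impHull S :=
  Finset.subset_union_left

theorem imp_mem_impHull {S : Finset Fml} {a b : Fml} (ha : a ∈ S) (hb : b ∈ S) :
    imp a b ∈ impHull S :=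
  Finset.mem_union_right _ (Finset.mem_image.mpr ⟨(a, b), Finset.mem_product.mpr ⟨ha, hb⟩, rfl⟩)

theorem card_impHull_le (S : Finset Fml) : (impHull S).card ≤ S.card + S.card ^ 2 := by
  calc (impHull S).card ≤ S.card + ((S ×ˢ S).image fun p => imp p.1 p.2).card :=
        Finset.card_union_le _ _
    _ ≤ S.card + (S ×ˢ S).card := by gcongr; exact Finset.card_image_le
    _ = S.card + S.card ^ 2 := by rw [Finset.card_product, sq]

theorem weight_le_of_mem_impHull {S : Finset Fml} {n : ℕ} (hS : ∀ σ ∈ S, σ.weight ≤ n)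
    {φ : Fml} (h : φ ∈ impHull S) : φ.weight ≤ 2 * n + 1 := by
  rcases Finset.mem_union.mp h with h | h
  · linarith [hS φ h]
  · obtain ⟨⟨a, b⟩, hab, rfl⟩ := Finset.mem_image.mp h
    rw [Finset.mem_product] at hab
    simp only [weight]
    linarith [hS a hab.1, hS b hab.2]

end Fml

open Fml

inductive Derivable (S : Finset Fml) : Finset Fml → Fml → Prop
  | assumption {Γ : Finset Fml} {σ : Fml} : σ ∈ Γ → Derivable S Γ σ
  | impE {Γ : Finset Fml} {α β : Fml} : imp α β ∈ S →
      Derivable S Γ (imp α β) → Derivable S Γ α → Derivable S Γ β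
  | impI {Γ : Finset Fml} {α β : Fml} : imp α β ∈ S →
      Derivable S (insert α Γ) β → Derivable S Γ (imp α β)

namespace Derivable

variable {S Γ : Finset Fml} {σ : Fml}

theorem mono (h : Derivable S Γ σ) {Γ' : Finset Fml} (hΓ : Γ ⊆ Γ') : Derivable S Γ' σ := by
  induction h generalizing Γ' with
  | assumption h => exact assumption (hΓ h)
  | impE hS _ _ ih₁ ih₂ => exact impE hS (ih₁ hΓ) (ih₂ hΓ)
  | impI hS _ ih => exact impI hS (ih (Finset.insert_subset_insert _ hΓ))

theorem mem (hS : ImpClosed S) (h : Derivable S Γ σ) (hΓ : Γ ⊆ S) : σ ∈ S := by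
  induction h with
  | assumption h => exact hΓ h
  | impE h _ _ _ _ => exact (hS h).2
  | impI h _ _ => exact h

end Derivable

/-- Forcing in the canonical Kripke model of `S`-restricted derivability: worlds are
contexts, and `Δ` extends `Γ` when it derives everything `Γ` derives. -/
def Forces (S : Finset Fml) : Fml → Finset Fml → Prop
  | var n, Γ => Derivable S Γ (var n)
  | imp a b, Γ => ∀ Δ : Finset Fml, (∀ χ, Derivable S Γ χ → Derivable S Δ χ) →
      Forces S a Δ → Forces S b Δ

theorem Forces.mono {S Γ Δ : Finset Fml} {φ : Fml}
    (hΓΔ : ∀ χ, Derivable S Γ χ → Derivable S Δ χ) (h : Forces S φ Γ) : Forces S φ Δ := by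
  cases φ with
  | var n => exact hΓΔ _ h
  | imp a b => exact fun Θ hΔΘ ha => h Θ (fun χ hχ => hΔΘ χ (hΓΔ χ hχ)) ha

theorem derivable_iff_forces {S : Finset Fml} (hS : ImpClosed S) {φ : Fml} (hφ : φ ∈ S)
    (Γ : Finset Fml) : Derivable S Γ φ ↔ Forces S φ Γ := by
  induction φ generalizing Γ with
  | var n => rfl
  | imp a b iha ihb =>
    obtain ⟨ha, hb⟩ := hS hφ
    constructor
    · intro hab Δ hΓΔ hfa
      exact (ihb hb Δ).mp (.impE hφ (hΓΔ _ hab) ((iha ha Δ).mpr hfa))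
    · intro hf
      refine .impI hφ ((ihb hb _).mpr (hf (insert a Γ) (fun χ hχ => hχ.mono ?_) ?_))
      · exact Finset.subset_insert _ _
      · exact (iha ha _).mp (.assumption (Finset.mem_insert_self _ _))

theorem DT.Correct.forces_label {S Γ : Finset Fml} {t : DT} (ht : t.Correct) {D : Set Fml}
    (hcl : t.ClosedUnder D) (hD : ∀ δ ∈ D, Forces S δ Γ) : Forces S t.label Γ := by
  induction ht generalizing D Γ with
  | leaf φ =>
    cases hcl with
    | leaf hφ => exact hD _ hφ
  | @impI α β t hlab _ ih =>
    cases hcl with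
    | impI hcl =>
      intro Δ hΓΔ hα
      rw [← hlab]
      refine ih hcl fun δ hδ => ?_
      rcases Set.mem_insert_iff.mp hδ with rfl | hδ
      · exact hα
      · exact (hD δ hδ).mono hΓΔ
  | impE hlab₁ hlab₂ _ _ ih₁ ih₂ =>
    cases hcl with
    | impE hcl₁ hcl₂ =>
      have h₂ := ih₂ hcl₂ hD
      rw [hlab₂] at h₂
      exact h₂ Γ (fun _ h => h) (hlab₁ ▸ ih₁ hcl₁ hD)
  | @rep φ ts hne hlab _ ih =>
    cases hcl with
    | rep hcl =>
      obtain ⟨t, ht⟩ := List.exists_mem_of_ne_nil ts hne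
      exact hlab t ht ▸ ih t ht (hcl t ht) hD

theorem DT.IsProofNMPlus.derivable {t : DT} {ρ : Fml} (ht : t.IsProofNMPlus ρ)
    {S : Finset Fml} (hS : ImpClosed S) (hρ : ρ ∈ S) : Derivable S ∅ ρ := by
  obtain ⟨hcorrect, hclosed, rfl⟩ := ht
  exact (derivable_iff_forces hS hρ ∅).mpr
    (hcorrect.forces_label hclosed fun _ h => absurd h (Set.notMem_empty _))

def BoundedDeduction (F Γ : Finset Fml) (σ : Fml) (h : ℕ) : Prop :=
  ∃ t : DT, t.RepFree ∧ t.Correct ∧ t.ClosedUnder ↑Γ ∧ t.label = σ ∧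
    t.height ≤ h ∧ t.formulas ⊆ F

namespace BoundedDeduction

variable {F Γ : Finset Fml} {α β σ : Fml} {h : ℕ}

theorem mono (hσ : BoundedDeduction F Γ σ h) {h' : ℕ} (hh : h ≤ h') :
    BoundedDeduction F Γ σ h' := by
  obtain ⟨t, hrf, hc, hcl, hlab, hht, hF⟩ := hσ
  exact ⟨t, hrf, hc, hcl, hlab, hht.trans hh, hF⟩

theorem assumption (hΓ : σ ∈ Γ) (hF : σ ∈ F) : BoundedDeduction F Γ σ 0 :=
  ⟨.leaf σ, .leaf σ, .leaf σ, .leaf hΓ, rfl, by simp [DT.height], by simpa [DT.formulas] using hF⟩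

theorem impI (hF : imp α β ∈ F) (hβ : BoundedDeduction F (insert α Γ) β h) :
    BoundedDeduction F Γ (imp α β) (h + 1) := by
  obtain ⟨t, hrf, hc, hcl, rfl, hht, htF⟩ := hβ
  refine ⟨.impI α t.label t, .impI hrf, .impI rfl hc, .impI ?_, rfl, ?_, ?_⟩
  · rwa [← Finset.coe_insert]
  · simpa [DT.height] using hht
  · simpa [DT.formulas, Finset.insert_subset_iff] using ⟨hF, htF⟩

theorem impE (hF : β ∈ F) (hα : BoundedDeduction F Γ α h)
    (hαβ : BoundedDeduction F Γ (imp α β) h) : BoundedDeduction F Γ β (h + 1) := by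
  obtain ⟨t₁, hrf₁, hc₁, hcl₁, hlab₁, hht₁, hF₁⟩ := hα
  obtain ⟨t₂, hrf₂, hc₂, hcl₂, hlab₂, hht₂, hF₂⟩ := hαβ
  refine ⟨.impE α β t₁ t₂, .impE hrf₁ hrf₂, .impE hlab₁ hlab₂ hc₁ hc₂, .impE hcl₁ hcl₂, rfl,
    ?_, ?_⟩
  · simpa [DT.height] using ⟨hht₁, hht₂⟩
  · simpa [DT.formulas, Finset.insert_subset_iff, Finset.union_subset_iff] using
      ⟨hF, hF₁, hF₂⟩

theorem exists_isProofNM (hσ : BoundedDeduction F ∅ σ h) :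
    ∃ t : DT, t.IsProofNM σ ∧ t.height ≤ h ∧ t.formulas ⊆ F := by
  obtain ⟨t, hrf, hc, hcl, hlab, hht, hF⟩ := hσ
  exact ⟨t, ⟨hrf, hc, by simpa using hcl, hlab⟩, hht, hF⟩

end BoundedDeduction

section Extraction

variable {S : Finset Fml}

theorem Derivable.mem_or_exists_boundedDeduction (hS : ImpClosed S) {k : ℕ}
    (ih : ∀ Γ ⊆ S, S.card ≤ Γ.card + k → ∀ σ, Derivable S Γ σ →
      BoundedDeduction (impHull S) Γ σ (2 * k))
    {Γ : Finset Fml} {σ : Fml} (h : Derivable S Γ σ) (hΓ : Γ ⊆ S)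
    (hcard : S.card ≤ Γ.card + (k + 1)) :
    σ ∈ Γ ∨ ∃ τ ∈ S, τ ∉ Γ ∧ BoundedDeduction (impHull S) Γ τ (2 * k + 1) := by
  have hF := subset_impHull S
  induction h with
  | assumption h => exact .inl h
  | @impE Γ α β hαβS _ _ ihαβ ihα =>
    rcases ihα hΓ hcard with hα | hnew
    · rcases ihαβ hΓ hcard with hαβ | hnew
      · by_cases hβ : β ∈ Γ
        · exact .inl hβ
        refine .inr ⟨β, (hS hαβS).2, hβ, ?_⟩
        refine (BoundedDeduction.impE (hF (hS hαβS).2) (.assumption hα (hF (hΓ hα)))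
          (.assumption hαβ (hF hαβS))).mono (by omega)
      · exact .inr hnew
    · exact .inr hnew
  | @impI Γ α β hαβS hβ ihβ =>
    by_cases hαβ : imp α β ∈ Γ
    · exact .inl hαβ
    by_cases hα : α ∈ Γ
    · rw [Finset.insert_eq_self.mpr hα] at ihβ
      rcases ihβ hΓ hcard with hβΓ | hnew
      · refine .inr ⟨imp α β, hαβS, hαβ, ?_⟩
        exact ((BoundedDeduction.assumption (Finset.mem_insert_of_mem hβΓ)
          (hF (hS hαβS).2)).impI (hF hαβS)).mono (by omega)
      · exact .inr hnew
    · have hcard' : S.card ≤ (insert α Γ).card + k := by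
        rw [Finset.card_insert_of_notMem hα]; omega
      exact .inr ⟨imp α β, hαβS, hαβ,
        (ih _ (Finset.insert_subset (hS hαβS).1 hΓ) hcard' β hβ).impI (hF hαβS)⟩

theorem Derivable.boundedDeduction (hS : ImpClosed S) (k : ℕ) :
    ∀ Γ ⊆ S, S.card ≤ Γ.card + k → ∀ σ, Derivable S Γ σ →
      BoundedDeduction (impHull S) Γ σ (2 * k) := by
  induction k with
  | zero =>
    intro Γ hΓ hcard σ hσ
    have hΓS : Γ = S := Finset.eq_of_subset_of_card_le hΓ (by omega)
    exact .assumption (hΓS ▸ hσ.mem hS hΓ) (subset_impHull S (hσ.mem hS hΓ))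
  | succ k ih =>
    intro Γ hΓ hcard σ hσ
    rcases hσ.mem_or_exists_boundedDeduction hS ih hΓ hcard with hσΓ | ⟨τ, hτS, hτΓ, hτ⟩
    · exact (BoundedDeduction.assumption hσΓ (subset_impHull S (hΓ hσΓ))).mono (Nat.zero_le _)
    have hcard' : S.card ≤ (insert τ Γ).card + k := by
      rw [Finset.card_insert_of_notMem hτΓ]; omega
    have hσS := hσ.mem hS hΓ
    have hτσ := (ih _ (Finset.insert_subset hτS hΓ) hcard' σ
      (hσ.mono (Finset.subset_insert _ _))).impI (imp_mem_impHull hτS hσS)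
    exact hτ.impE (subset_impHull S hσS) hτσ

end Extraction

theorem DT.phi_le_card_mul {t : DT} {F : Finset Fml} {w : ℕ} (htF : t.formulas ⊆ F)
    (hw : ∀ φ ∈ F, φ.weight ≤ w) : t.phi ≤ F.card * w :=
  (Finset.sum_le_sum_of_subset htF).trans (by simpa using Finset.sum_le_card_nsmul F weight w hw)

theorem MinValid.exists_proof_height_add_phi_le {ρ : Fml} (hρ : MinValid ρ) :
    ∃ t : DT, t.IsProofNM ρ ∧
      t.height + t.phi ≤ 2 * ρ.weight + (ρ.weight + ρ.weight ^ 2) * (2 * ρ.weight + 1) := by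
  obtain ⟨t₀, -, ht₀⟩ := hρ
  have hS := impClosed_subformulas ρ
  have hder := DT.IsProofNMPlus.derivable ht₀ hS (mem_subformulas_self ρ)
  obtain ⟨t, ht, hheight, htF⟩ :=
    (hder.boundedDeduction hS _ ∅ (Finset.empty_subset _) le_add_self ρ).exists_isProofNM
  have hcard := card_subformulas_le_weight ρ
  have hphi := t.phi_le_card_mul htF fun _ => weight_le_of_mem_impHull
    fun _ => weight_le_of_mem_subformulas
  refine ⟨t, ht, ?_⟩
  calc t.height + t.phi
      ≤ 2 * ρ.subformulas.card + (ρ.subformulas.card + ρ.subformulas.card ^ 2)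
          * (2 * ρ.weight + 1) := by
        gcongr; exact hphi.trans (by gcongr; exact card_impHull_le _)
    _ ≤ _ := by gcongr

/-- There is a polynomial `p` such that every purely implicational formula `ρ` valid
in minimal logic has a quasi-polynomial tree-like proof in NM→, i.e. a tree-like NM→
proof `∂` of `ρ` with `h(∂) + φ(∂) ≤ p(|ρ|)`. -/
theorem minValid_has_quasiPolynomial_treeProof :
    ∃ p : Polynomial ℕ, ∀ ρ : Fml, MinValid ρ →
      ∃ t : DT, t.IsProofNM ρ ∧ t.height + t.phi ≤ p.eval ρ.weight := by
  refine ⟨2 * .X + (.X + .X ^ 2) * (2 * .X + 1), fun ρ hρ => ?_⟩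
  simpa using hρ.exists_proof_height_add_phi_le
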